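/- Let L > 0 and let S : (0,1)ⁿ → ℝⁿ be defined recursively by o₀ = 2L·(d₀ − 1/2) and o_i = d_i·(L − o_{i-1}) + o_{i-1} for 1 ≤ i ≤ n−1, where d = (d₀,...,d_{n-1}) ∈ (0,1)ⁿ. Then S is the inverse of the map T of the previous statement: for every strictly increasing x ∈ (−L, L)ⁿ, S(T(x)) = x, and the image of S consists of strictly increasing tuples in (−L, L)ⁿ. -/

import Mathlib

/-- The relative coordinate transform for ordered particles in the box `[-L, L]`. -/
noncomputable def relT (L : ℝ) (n : ℕ) (x : Fin n → ℝ) : Fin n → ℝ := fun i =>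
  if _h : (i : ℕ) = 0 then (x i + L) / (2 * L)
  else
    (x i - x ⟨(i : ℕ) - 1, Nat.lt_of_le_of_lt (Nat.sub_le _ _) i.isLt⟩) /
      (L - x ⟨(i : ℕ) - 1, Nat.lt_of_le_of_lt (Nat.sub_le _ _) i.isLt⟩)

/-- Auxiliary recursion reconstructing absolute coordinates from relative ones. -/
noncomputable def relSaux (L : ℝ) (d : ℕ → ℝ) : ℕ → ℝ
  | 0 => 2 * L * (d 0 - 1 / 2)
  | (i + 1) => d (i + 1) * (L - relSaux L d i) + relSaux L d i

/-- The inverse map: reconstructs absolute coordinates from relative ones. -/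
noncomputable def relS (L : ℝ) (n : ℕ) (d : Fin n → ℝ) : Fin n → ℝ := fun i =>
  relSaux L (fun j => if h : j < n then d ⟨j, h⟩ else 0) (i : ℕ)

/-!
`S` walks from `-L` towards `L`: its first step puts `o₀ = -L + 2L d₀`, and each later step moves
the fraction `dᵢ ∈ (0, 1)` of the remaining gap `L - oᵢ₋₁`, so the points increase and stay
below `L`. Conversely `Tᵢ(x)` is exactly that fraction for the gap `L - xᵢ₋₁`, so `S` rebuilds
`x` coordinate by coordinate.
-/

open Set

lemma mul_sub_add_mem_Ioo {L o t : ℝ} (ho : o < L) (ht : t ∈ Ioo 0 1) :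
    t * (L - o) + o ∈ Ioo o L := by
  obtain ⟨ht₀, ht₁⟩ := ht
  constructor <;> nlinarith

section relSaux

variable {L : ℝ} {d : ℕ → ℝ}

lemma relSaux_mem_Ioo (hL : 0 < L) {i : ℕ} (hd : ∀ j ≤ i, d j ∈ Ioo 0 1) :
    relSaux L d i ∈ Ioo (-L) L := by
  induction i with
  | zero =>
    obtain ⟨hd₀, hd₁⟩ := hd 0 le_rfl
    constructor <;> simp only [relSaux] <;> nlinarith
  | succ i ih =>
    have hprev := ih fun j hj => hd j (Nat.le_succ_of_le hj)
    have hstep := mul_sub_add_mem_Ioo hprev.2 (hd (i + 1) le_rfl)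
    exact ⟨hprev.1.trans hstep.1, hstep.2⟩

lemma relSaux_lt_succ (hL : 0 < L) {i : ℕ} (hd : ∀ j ≤ i + 1, d j ∈ Ioo 0 1) :
    relSaux L d i < relSaux L d (i + 1) :=
  (mul_sub_add_mem_Ioo (relSaux_mem_Ioo hL fun j hj => hd j (Nat.le_succ_of_le hj)).2
    (hd (i + 1) le_rfl)).1

lemma strictMonoOn_relSaux (hL : 0 < L) {n : ℕ} (hd : ∀ j < n, d j ∈ Ioo 0 1) :
    StrictMonoOn (relSaux L d) (Iio n) :=
  strictMonoOn_of_lt_succ ordConnected_Iio fun _ _ _ hsucc =>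
    relSaux_lt_succ hL fun j hj => hd j (lt_of_le_of_lt hj hsucc)

end relSaux

section relT

variable {L : ℝ} {n : ℕ} (x : Fin n → ℝ)

@[simp]
lemma relT_zero (h : 0 < n) : relT L n x ⟨0, h⟩ = (x ⟨0, h⟩ + L) / (2 * L) := by
  simp [relT]

@[simp]
lemma relT_succ {i : ℕ} (h : i + 1 < n) :
    relT L n x ⟨i + 1, h⟩ = (x ⟨i + 1, h⟩ - x ⟨i, by omega⟩) / (L - x ⟨i, by omega⟩) := by
  simp [relT]

end relT

variable {L : ℝ} {n : ℕ}

lemma relS_relT (hL : 0 < L) (x : Fin n → ℝ) (hx : ∀ i, x i < L) : relS L n (relT L n x) = x := by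
  funext ⟨i, hi⟩
  induction i with
  | zero =>
    simp only [relS, relSaux, hi, dif_pos, relT_zero]
    field_simp
    ring
  | succ i ih =>
    have hi' : i < n := by omega
    have hgap : L - x ⟨i, hi'⟩ ≠ 0 := sub_ne_zero.2 (hx _).ne'
    simp only [relS] at ih ⊢
    simp only [relSaux, hi, dif_pos, relT_succ, ih hi']
    rw [div_mul_cancel₀ _ hgap, sub_add_cancel]

lemma relS_mem_Ioo (hL : 0 < L) {d : Fin n → ℝ} (hd : ∀ i, d i ∈ Ioo 0 1) (i : Fin n) :
    relS L n d i ∈ Ioo (-L) L :=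
  relSaux_mem_Ioo hL fun j hj => by simpa [lt_of_le_of_lt hj i.isLt] using hd _

lemma strictMono_relS (hL : 0 < L) {d : Fin n → ℝ} (hd : ∀ i, d i ∈ Ioo 0 1) :
    StrictMono (relS L n d) := fun a b hab =>
  strictMonoOn_relSaux hL (fun j hj => by simpa [hj] using hd ⟨j, hj⟩) a.isLt b.isLt hab

theorem relS_inverse_of_relT (L : ℝ) (hL : 0 < L) (n : ℕ) :
    (∀ x : Fin n → ℝ, StrictMono x → (∀ i, x i ∈ Set.Ioo (-L) L) →
      relS L n (relT L n x) = x) ∧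
    (∀ d : Fin n → ℝ, (∀ i, d i ∈ Set.Ioo (0 : ℝ) 1) →
      StrictMono (relS L n d) ∧ ∀ i, relS L n d i ∈ Set.Ioo (-L) L) :=
  ⟨fun x _ hx => relS_relT hL x fun i => (hx i).2,
    fun _ hd => ⟨strictMono_relS hL hd, relS_mem_Ioo hL hd⟩⟩
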